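/- Suppose λ ⊳ μ are partitions with λ strictly dominating μ, |λ| = |μ| = n, and [μ] \ r^μ_y = [λ] \ r^λ_x for rim hooks r^λ_x of λ and r^μ_y of μ (i.e., μ is obtained from λ by unwrapping one rim hook and wrapping it back on elsewhere). If the foot residues (mod e) of r^λ_x and r^μ_y differ, then there is exactly one other pair of rim hooks (r^λ_{x'}, r^μ_{y'}) with [λ]\r^λ_{x'} = [μ]\r^μ_{y'}, and leg(r^λ_x) + leg(r^μ_y) and leg(r^λ_{x'}) + leg(r^μ_{y'}) have opposite parities. -/

import Mathlib

noncomputable section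

/-- A partition: a weakly decreasing sequence of natural numbers with finite support.
Rows and columns are indexed from `0`. -/
structure Partition' where
  parts : ℕ → ℕ
  antitone : ∀ ⦃i j : ℕ⦄, i ≤ j → parts j ≤ parts i
  finite_support : ∃ N, ∀ i, N ≤ i → parts i = 0

namespace Partition'

/-- The Young diagram of a partition: cells `(i, j)` with `j < λ_i` (0-indexed). -/
def cells (p : Partition') : Set (ℕ × ℕ) := {x | x.2 < p.parts x.1}

/-- The size `|λ|` of a partition. -/
def size (p : Partition') : ℕ := p.cells.ncard

/-- Two cells are adjacent if they share an edge. -/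
def adjacent (a b : ℕ × ℕ) : Prop :=
  (a.1 = b.1 ∧ (a.2 + 1 = b.2 ∨ b.2 + 1 = a.2)) ∨
  (a.2 = b.2 ∧ (a.1 + 1 = b.1 ∨ b.1 + 1 = a.1))

/-- A set of cells is (edge-)connected. -/
def ConnectedSet (S : Set (ℕ × ℕ)) : Prop :=
  ∀ a ∈ S, ∀ b ∈ S, ∃ (n : ℕ) (f : ℕ → ℕ × ℕ),
    f 0 = a ∧ f n = b ∧ (∀ k < n, adjacent (f k) (f (k + 1))) ∧ (∀ k ≤ n, f k ∈ S)

/-- A set of cells contains no 2×2 square. -/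
def No2x2 (S : Set (ℕ × ℕ)) : Prop :=
  ∀ i j : ℕ, ¬ ((i, j) ∈ S ∧ (i + 1, j) ∈ S ∧ (i, j + 1) ∈ S ∧ (i + 1, j + 1) ∈ S)

/-- `AddRimHook p q h` : the partition `q` is obtained from `p` by wrapping on
(a connected skew shape of size `h` containing no 2×2 square, i.e.) a rim hook of length `h`. -/
def AddRimHook (p q : Partition') (h : ℕ) : Prop :=
  p.cells ⊆ q.cells ∧ (q.cells \ p.cells).ncard = h ∧
    ConnectedSet (q.cells \ p.cells) ∧ No2x2 (q.cells \ p.cells)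

/-- The length `λ'_j` of column `j` (0-indexed) of a partition. -/
def colLen (p : Partition') (j : ℕ) : ℕ := {i : ℕ | (i, j) ∈ p.cells}.ncard

/-- The rim hook `r^λ_x` attached to the node `x = (i,j)` of `λ`. -/
def rimHook (p : Partition') (i j : ℕ) : Set (ℕ × ℕ) :=
  {y ∈ p.cells | i ≤ y.1 ∧ j ≤ y.2 ∧ (y.1 + 1, y.2 + 1) ∉ p.cells}

/-- The leg length of the rim hook `r^λ_{(i,j)}`. -/
def legLength (p : Partition') (i j : ℕ) : ℕ := p.colLen j - 1 - i

/-- The hook length `h^λ_{(i,j)}` of the node `(i,j) ∈ [λ]` (0-indexed). -/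
def hookLen (p : Partition') (i j : ℕ) : ℕ := p.parts i + p.colLen j - i - j - 1

/-- The residue mod `e` of the foot node of a rim hook `r^λ_{(i,j)}`; the foot node is
`(λ'_j - 1, j)` (0-indexed), so its residue is `j - λ'_j + 1 = (j+1) - λ'_j` mod `e`. -/
def footRes (e : ℕ) (p : Partition') (j : ℕ) : ZMod e :=
  (((j : ℤ) + 1 - p.colLen j : ℤ) : ZMod e)

/-- `C_f(λ)` : the number of nodes of `λ` with residue `f` mod `e`, using charge `c`
(the residue of node `(i,j)` (0-indexed) is `j - i + c` mod `e`). -/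
def resCount (e : ℕ) (c : ℤ) (p : Partition') (f : ZMod e) : ℕ :=
  {x ∈ p.cells | (((x.2 : ℤ) - x.1 + c : ℤ) : ZMod e) = f}.ncard

/-- The set of β-numbers of `p` with charge `c` : `β_i = λ_i - i + c` (1-indexed rows). -/
def betaSet (p : Partition') (c : ℤ) : Set ℤ :=
  {z | ∃ i : ℕ, z = (p.parts i : ℤ) - (i + 1) + c}

/-- The dominance order on partitions. -/
def Dominates (p q : Partition') : Prop :=
  ∀ m : ℕ, ∑ i ∈ Finset.range m, q.parts i ≤ ∑ i ∈ Finset.range m, p.parts i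

end Partition'


/-!
Encode a partition `λ` by its β-numbers `λ_a - a`, read as beads on an abacus. Removing the rim
hook `r^λ_{(i,j)}` moves the bead `λ_i - i` down to the empty position `j + 1 - λ'_j` (whose class
mod `e` is the foot residue), and its leg length is the number of beads strictly between the two
positions. As `|λ| = |μ|`, the two moves `α ↦ a` (in `λ`) and `β ↦ b` (in `μ`) relating `λ` and `μ`
have the same length. The foot residues differ, so `a ≠ b`; say `b < a`. Then the bead sets of `λ`
and `μ` differ exactly in `{α, b}` versus `{β, a}`, so the only other pair of moves with a common
outcome is `α ↦ β`, `a ↦ b`. Splitting the intervals of the bead counts at `a` and `β` shows that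
the two leg-length sums differ by `2m + 1`, where `m` is the number of beads strictly between `a`
and `β`.
-/

open Set

open scoped Classical in
lemma ncard_inter_Ioo_eq_add {S : Set ℤ} {x y z : ℤ} (hxy : x < y) (hyz : y < z) :
    (S ∩ Ioo x z).ncard
      = (S ∩ Ioo x y).ncard + (S ∩ Ioo y z).ncard + if y ∈ S then 1 else 0 := by
  have hfin : ∀ u v : ℤ, (S ∩ Ioo u v).Finite := fun u v => (finite_Ioo u v).inter_of_right S
  have hdisj : Disjoint (S ∩ Ioo x y) (S ∩ Ico y z) := disjoint_left.mpr fun w hw hw' => by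
    simp only [mem_inter_iff, mem_Ioo, mem_Ico] at hw hw'; omega
  rw [← Ioo_union_Ico_eq_Ioo hxy hyz.le, inter_union_distrib_left,
    ncard_union_eq hdisj (hfin x y) ((finite_Ico y z).inter_of_right S), ← Ioo_insert_left hyz]
  split_ifs with hy
  · rw [inter_insert_of_mem hy, ncard_insert_of_notMem (fun h => h.2.1.ne rfl) (hfin y z)]; ring
  · rw [inter_insert_of_notMem hy]; ring

lemma range_inj_of_strictAnti {γ : Type*} [Preorder γ] {f g : ℕ → γ} (hf : StrictAnti f)
    (hg : StrictAnti g) : range f = range g ↔ f = g :=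
  StrictMono.range_inj (γ := γᵒᵈ) hf hg

lemma setOf_lt_eq_iff {R S : ℕ → ℕ} :
    {x : ℕ × ℕ | x.2 < R x.1} = {x | x.2 < S x.1} ↔ R = S := by
  refine ⟨fun h => funext fun a => ?_, fun h => h ▸ rfl⟩
  have h1 := Set.ext_iff.mp h (a, R a)
  have h2 := Set.ext_iff.mp h (a, S a)
  simp only [mem_ofPred_eq] at h1 h2
  omega

lemma ncard_setOf_lt {R : ℕ → ℕ} {N : ℕ} (hN : ∀ a, N ≤ a → R a = 0) :
    {x : ℕ × ℕ | x.2 < R x.1}.ncard = ∑ a ∈ Finset.range N, R a := by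
  have hset : {x : ℕ × ℕ | x.2 < R x.1}
      = ↑((Finset.range N).biUnion fun a => {a} ×ˢ Finset.range (R a)) := by
    ext ⟨a, b⟩
    simp only [mem_ofPred_eq, Finset.singleton_product, Finset.coe_biUnion, Finset.coe_range,
      mem_Iio, Finset.coe_map, Function.Embedding.coeFn_mk, mem_iUnion, mem_image, Prod.mk.injEq,
      exists_eq_right_right, exists_and_left, exists_prop, iff_self_and]
    intro hb
    exact not_le.mp fun ha => by rw [hN a ha] at hb; omega
  rw [hset, ncard_coe_finset, Finset.card_biUnion]
  · simp
  · intro a _ b _ hab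
    simp only [Finset.disjoint_left, Finset.mem_product, Finset.mem_singleton]
    rintro x ⟨rfl, -⟩ ⟨h, -⟩
    exact hab h

def moveBead (A : Set ℤ) (a a' : ℤ) : Set ℤ := insert a' (A \ {a})

section moveBead

variable {A B : Set ℤ} {α a β b : ℤ}

lemma mem_iff_mem_of_moveBead_eq (h : moveBead A α a = moveBead B β b) {z : ℤ}
    (hzα : z ≠ α) (hza : z ≠ a) (hzβ : z ≠ β) (hzb : z ≠ b) : z ∈ A ↔ z ∈ B := by
  have := Set.ext_iff.mp h z
  simp only [moveBead, mem_insert_iff, mem_sdiff, mem_singleton_iff] at this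
  tauto

lemma eq_or_eq_of_moveBead_eq (h : moveBead A α a = moveBead B β b) {z : ℤ}
    (hzA : z ∈ A) (hzB : z ∉ B) : z = α ∨ z = b := by
  have := Set.ext_iff.mp h z
  simp only [moveBead, mem_insert_iff, mem_sdiff, mem_singleton_iff] at this
  tauto

lemma mem_of_moveBead_eq (h : moveBead A α a = moveBead B β b) (hab : a ≠ b) :
    a ∈ B ∧ a ≠ β := by
  have := Set.ext_iff.mp h a
  simp only [moveBead, mem_insert_iff, mem_sdiff, mem_singleton_iff] at this
  tauto

lemma notMem_of_moveBead_eq (h : moveBead A α a = moveBead B β b) (hα : α ∈ A) (ha : a ∉ A)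
    (hαβ : α ≠ β) : α ∉ B := by
  intro hαB
  have := Set.ext_iff.mp h α
  simp only [moveBead, mem_insert_iff, mem_sdiff, mem_singleton_iff, not_true_eq_false,
    and_false, or_false] at this
  exact ha (this.mpr (Or.inr ⟨hαB, hαβ⟩) ▸ hα)

lemma inter_Ioo_eq_of_moveBead_eq (h : moveBead A α a = moveBead B β b) {u v : ℤ}
    (hI : ∀ z ∈ Ioo u v, z ≠ α ∧ z ≠ a ∧ z ≠ β ∧ z ≠ b) : A ∩ Ioo u v = B ∩ Ioo u v := by
  ext z
  simp only [mem_inter_iff]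
  refine and_congr_left fun hz => ?_
  obtain ⟨hzα, hza, hzβ, hzb⟩ := hI z hz
  exact mem_iff_mem_of_moveBead_eq h hzα hza hzβ hzb

lemma moveBead_eq_moveBead_of_lt (hα : α ∈ A) (ha : a ∉ A) (hβ : β ∈ B) (hb : b ∉ B)
    (hAB : moveBead A α a = moveBead B β b) (hsub : α - a = β - b) (hba : b < a) :
    moveBead A α β = moveBead B a b := by
  obtain ⟨haB, haβ⟩ := mem_of_moveBead_eq hAB hba.ne'
  obtain ⟨hbA, hbα⟩ := mem_of_moveBead_eq hAB.symm hba.ne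
  have hαB := notMem_of_moveBead_eq hAB hα ha (by omega)
  have hβA := notMem_of_moveBead_eq hAB.symm hβ hb (by omega)
  ext z
  have := Set.ext_iff.mp hAB z
  simp only [moveBead, mem_insert_iff, mem_sdiff, mem_singleton_iff] at this ⊢
  grind

lemma eq_of_moveBead_eq_of_lt (hα : α ∈ A) (ha : a ∉ A) (hβ : β ∈ B) (hb : b ∉ B)
    (hAB : moveBead A α a = moveBead B β b) (hsub : α - a = β - b) (hba : b < a) (hbβ : b < β)
    {γ c δ d : ℤ} (h : moveBead A γ c = moveBead B δ d) (hdδ : d < δ) :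
    γ = α ∧ d = b ∧ (c = a ∧ δ = β ∨ c = β ∧ δ = a) := by
  obtain ⟨haB, haβ⟩ := mem_of_moveBead_eq hAB hba.ne'
  obtain ⟨hbA, hbα⟩ := mem_of_moveBead_eq hAB.symm hba.ne
  have hαB := notMem_of_moveBead_eq hAB hα ha (by omega)
  have hβA := notMem_of_moveBead_eq hAB.symm hβ hb (by omega)
  -- `A \ B = {α, b}` and `B \ A = {β, a}` are exhausted by the moves; `d < δ` rules out `d = α`.
  have h1 := eq_or_eq_of_moveBead_eq h hα hαB
  have h2 := eq_or_eq_of_moveBead_eq h hbA hb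
  have h3 := eq_or_eq_of_moveBead_eq h.symm hβ hβA
  have h4 := eq_or_eq_of_moveBead_eq h.symm haB ha
  omega

lemma ncard_parity_ne_of_lt (ha : a ∉ A) (hβ : β ∈ B) (hb : b ∉ B)
    (hAB : moveBead A α a = moveBead B β b) (hsub : α - a = β - b) (hba : b < a) (hbβ : b < β) :
    ((A ∩ Ioo a α).ncard + (B ∩ Ioo b β).ncard) % 2
      ≠ ((A ∩ Ioo β α).ncard + (B ∩ Ioo b a).ncard) % 2 := by
  obtain ⟨haB, haβ⟩ := mem_of_moveBead_eq hAB hba.ne'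
  have hβA := notMem_of_moveBead_eq hAB.symm hβ hb (by omega)
  rcases haβ.lt_or_gt with haβ | haβ
  · have hsplitA := ncard_inter_Ioo_eq_add (S := A) haβ (show β < α by omega)
    have hsplitB := ncard_inter_Ioo_eq_add (S := B) hba haβ
    rw [if_neg hβA] at hsplitA
    rw [if_pos haB] at hsplitB
    have hmid := congrArg ncard <| inter_Ioo_eq_of_moveBead_eq (u := a) (v := β) hAB
      fun z hz => by simp only [mem_Ioo] at hz; omega
    omega
  · have hsplitA := ncard_inter_Ioo_eq_add (S := A) haβ (show a < α by omega)
    have hsplitB := ncard_inter_Ioo_eq_add (S := B) hbβ haβ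
    rw [if_neg ha] at hsplitA
    rw [if_pos hβ] at hsplitB
    have hmid := congrArg ncard <| inter_Ioo_eq_of_moveBead_eq (u := β) (v := a) hAB
      fun z hz => by simp only [mem_Ioo] at hz; omega
    omega

end moveBead

namespace Partition'

variable (p : Partition') {i j a : ℕ}

def beta (a : ℕ) : ℤ := p.parts a - a

/-- The position to which the bead `p.beta i` moves when the rim hook `r^p_{(i,j)}` is removed;
`footRes e p j` is its class mod `e`. -/
def footBeta (j : ℕ) : ℤ := j + 1 - p.colLen j

lemma betaSet_one : p.betaSet 1 = range p.beta := by
  ext z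
  simp only [betaSet, beta, mem_ofPred_eq, mem_range]
  exact exists_congr fun a => by constructor <;> intro h <;> omega

lemma beta_mem_betaSet : p.beta a ∈ p.betaSet 1 := by
  rw [betaSet_one]; exact mem_range_self a

lemma beta_strictAnti : StrictAnti p.beta :=
  strictAnti_nat_of_succ_lt fun a => by
    have := p.antitone (show a ≤ a + 1 by omega)
    simp only [beta]; omega

lemma lt_parts_iff_lt_colLen : j < p.parts a ↔ a < p.colLen j := by
  obtain ⟨N, hN⟩ := p.finite_support
  have hex : ∃ m, p.parts m ≤ j := ⟨N, by rw [hN N le_rfl]; exact j.zero_le⟩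
  have key : ∀ a, j < p.parts a ↔ a < Nat.find hex := fun a =>
    ⟨fun h => not_le.mp fun hle => (p.antitone hle).trans (Nat.find_spec hex) |>.not_gt h,
      fun h => not_le.mp (Nat.find_min hex h)⟩
  have hcol : p.colLen j = Nat.find hex := by
    rw [colLen, show {a | (a, j) ∈ p.cells} = ↑(Finset.range (Nat.find hex)) from
      Set.ext fun a => by simp only [cells, mem_ofPred_eq, Finset.coe_range, mem_Iio, key],
      ncard_coe_finset, Finset.card_range]
  rw [key, hcol]

lemma colLen_antitone : Antitone p.colLen := fun j j' hjj' => by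
  by_contra! h
  have h1 := (p.lt_parts_iff_lt_colLen (a := p.colLen j) (j := j')).mpr h
  have h2 := (p.lt_parts_iff_lt_colLen (a := p.colLen j) (j := j)).mp (by omega)
  omega

lemma footBeta_strictMono : StrictMono p.footBeta := fun j j' hjj' => by
  have := p.colLen_antitone hjj'.le
  simp only [footBeta]; omega

lemma footBeta_lt_beta_iff : p.footBeta j < p.beta a ↔ a < p.colLen j := by
  have := p.lt_parts_iff_lt_colLen (a := a) (j := j)
  simp only [footBeta, beta]; omega

lemma footBeta_notMem_betaSet : p.footBeta j ∉ p.betaSet 1 := by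
  rw [betaSet_one]
  rintro ⟨a, ha⟩
  have := p.lt_parts_iff_lt_colLen (a := a) (j := j)
  simp only [footBeta, beta] at ha; omega

lemma legLength_eq_ncard :
    p.legLength i j = (p.betaSet 1 ∩ Ioo (p.footBeta j) (p.beta i)).ncard := by
  have hset : p.betaSet 1 ∩ Ioo (p.footBeta j) (p.beta i)
      = p.beta '' ↑(Finset.Ioo i (p.colLen j)) := by
    ext z
    simp only [betaSet_one, mem_inter_iff, mem_range, mem_Ioo, Finset.coe_Ioo, mem_image]
    constructor
    · rintro ⟨⟨b, rfl⟩, h1, h2⟩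
      exact ⟨b, ⟨p.beta_strictAnti.lt_iff_gt.mp h2, p.footBeta_lt_beta_iff.mp h1⟩, rfl⟩
    · rintro ⟨b, ⟨h1, h2⟩, rfl⟩
      exact ⟨⟨b, rfl⟩, p.footBeta_lt_beta_iff.mpr h2, p.beta_strictAnti h1⟩
  rw [hset, ncard_image_of_injective _ p.beta_strictAnti.injective, ncard_coe_finset,
    Nat.card_Ioo, legLength]
  omega

def partsOffRimHook (i j a : ℕ) : ℕ :=
  if a < i then p.parts a else min (p.parts a) (max j (p.parts (a + 1) - 1))

lemma cells_diff_rimHook :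
    p.cells \ p.rimHook i j = {x | x.2 < p.partsOffRimHook i j x.1} := by
  ext ⟨a, b⟩
  simp only [mem_sdiff, cells, rimHook, partsOffRimHook, mem_ofPred_eq, not_and, not_not]
  split_ifs <;> omega

lemma partsOffRimHook_antitone : Antitone (p.partsOffRimHook i j) :=
  antitone_nat_of_succ_le fun a => by
    have h1 := p.antitone (show a ≤ a + 1 by omega)
    have h2 := p.antitone (show a + 1 ≤ a + 1 + 1 by omega)
    simp only [partsOffRimHook]
    split_ifs <;> omega

def betaOffRimHook (i j a : ℕ) : ℤ := p.partsOffRimHook i j a - a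

lemma betaOffRimHook_strictAnti : StrictAnti (p.betaOffRimHook i j) :=
  strictAnti_nat_of_succ_lt fun a => by
    have := p.partsOffRimHook_antitone (i := i) (j := j) (show a ≤ a + 1 by omega)
    simp only [betaOffRimHook]; omega

section

variable {p q : Partition'} {k l : ℕ}

lemma exists_footBeta_eq {v : ℤ} (hv : v < p.beta i) (hvD : v ∉ p.betaSet 1) :
    ∃ j, (i, j) ∈ p.cells ∧ p.footBeta j = v := by
  obtain ⟨N, hN⟩ := p.finite_support
  have hex : ∃ m, p.beta m < v := ⟨N + v.natAbs + 1, by rw [beta, hN _ (by omega)]; omega⟩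
  set m := Nat.find hex
  have hm : p.beta m < v := Nat.find_spec hex
  have hmin : ∀ b < m, v < p.beta b := fun b hb =>
    lt_of_le_of_ne (not_lt.mp (Nat.find_min hex hb)) fun h => hvD (h ▸ p.beta_mem_betaSet)
  -- `m` beads lie above `v`, so the hook ends in column `v + m - 1`, which has length `m`.
  have hfoot : p.footBeta (v + m - 1).toNat = v := by
    have h1 := p.lt_parts_iff_lt_colLen (a := m) (j := (v + m - 1).toNat)
    have h2 := p.lt_parts_iff_lt_colLen (a := m - 1) (j := (v + m - 1).toNat)
    have h3 := hmin (m - 1)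
    simp only [beta] at hm h3
    simp only [footBeta]
    omega
  refine ⟨_, p.lt_parts_iff_lt_colLen.mpr (p.footBeta_lt_beta_iff.mp ?_), hfoot⟩
  rwa [hfoot]

lemma betaOffRimHook_of_lt (ha : a < i) : p.betaOffRimHook i j a = p.beta a := by
  simp only [betaOffRimHook, partsOffRimHook, if_pos ha, beta]

lemma betaOffRimHook_of_colLen_le (ha : p.colLen j ≤ a) : p.betaOffRimHook i j a = p.beta a := by
  have := p.lt_parts_iff_lt_colLen (a := a) (j := j)
  simp only [betaOffRimHook, partsOffRimHook, beta]
  split_ifs <;> omega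

lemma betaOffRimHook_of_le_of_lt (hia : i ≤ a) (ha : a + 1 < p.colLen j) :
    p.betaOffRimHook i j a = p.beta (a + 1) := by
  have h1 := p.lt_parts_iff_lt_colLen (a := a + 1) (j := j)
  have h2 := p.antitone (show a ≤ a + 1 by omega)
  simp only [betaOffRimHook, partsOffRimHook, beta, if_neg (show ¬a < i by omega)]
  omega

lemma betaOffRimHook_of_add_one_eq_colLen (hx : (i, j) ∈ p.cells) (ha : a + 1 = p.colLen j) :
    p.betaOffRimHook i j a = p.footBeta j := by
  have h1 := p.lt_parts_iff_lt_colLen (a := a + 1) (j := j)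
  have h2 := p.lt_parts_iff_lt_colLen (a := a) (j := j)
  have h3 := p.lt_parts_iff_lt_colLen (a := i) (j := j)
  have hx : j < p.parts i := hx
  simp only [betaOffRimHook, partsOffRimHook, footBeta]
  split_ifs <;> omega

lemma range_betaOffRimHook (hx : (i, j) ∈ p.cells) :
    range (p.betaOffRimHook i j) = moveBead (range p.beta) (p.beta i) (p.footBeta j) := by
  have hic : i < p.colLen j := p.lt_parts_iff_lt_colLen.mp hx
  have hinj := p.beta_strictAnti.injective
  ext z
  simp only [moveBead, mem_insert_iff, mem_sdiff, mem_range, mem_singleton_iff]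
  constructor
  · rintro ⟨a, rfl⟩
    rcases lt_or_ge a i with ha | ha
    · exact Or.inr ⟨⟨a, (betaOffRimHook_of_lt ha).symm⟩,
        by rw [betaOffRimHook_of_lt ha]; exact hinj.ne ha.ne⟩
    rcases lt_trichotomy (a + 1) (p.colLen j) with hac | hac | hac
    · exact Or.inr ⟨⟨a + 1, (betaOffRimHook_of_le_of_lt ha hac).symm⟩,
        by rw [betaOffRimHook_of_le_of_lt ha hac]; exact hinj.ne (by omega)⟩
    · exact Or.inl (betaOffRimHook_of_add_one_eq_colLen hx hac)
    · exact Or.inr ⟨⟨a, (betaOffRimHook_of_colLen_le (by omega)).symm⟩,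
        by rw [betaOffRimHook_of_colLen_le (by omega)]; exact hinj.ne (by omega)⟩
  · rintro (rfl | ⟨⟨b, rfl⟩, hb⟩)
    · exact ⟨p.colLen j - 1, betaOffRimHook_of_add_one_eq_colLen hx (by omega)⟩
    have hbi : b ≠ i := fun h => hb (h ▸ rfl)
    rcases lt_or_ge b i with h | h
    · exact ⟨b, betaOffRimHook_of_lt h⟩
    rcases lt_or_ge b (p.colLen j) with h' | h'
    · refine ⟨b - 1, ?_⟩
      rw [betaOffRimHook_of_le_of_lt (by omega) (by omega), Nat.sub_add_cancel (by omega)]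
    · exact ⟨b, betaOffRimHook_of_colLen_le h'⟩

lemma cells_diff_rimHook_eq_iff (hx : (i, j) ∈ p.cells) (hy : (k, l) ∈ q.cells) :
    p.cells \ p.rimHook i j = q.cells \ q.rimHook k l ↔
      moveBead (p.betaSet 1) (p.beta i) (p.footBeta j)
        = moveBead (q.betaSet 1) (q.beta k) (q.footBeta l) := by
  rw [cells_diff_rimHook, cells_diff_rimHook, setOf_lt_eq_iff, betaSet_one, betaSet_one,
    ← range_betaOffRimHook hx, ← range_betaOffRimHook hy,
    range_inj_of_strictAnti p.betaOffRimHook_strictAnti q.betaOffRimHook_strictAnti]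
  refine ⟨fun h => funext fun a => ?_, fun h => funext fun a => ?_⟩
  · simp only [betaOffRimHook, h]
  · have := congrFun h a
    simp only [betaOffRimHook] at this
    omega

lemma sum_beta_sub_betaOffRimHook (hx : (i, j) ∈ p.cells) {N : ℕ} (hN : p.colLen j ≤ N) :
    ∑ a ∈ Finset.range N, (p.beta a - p.betaOffRimHook i j a) = p.beta i - p.footBeta j := by
  have hic : i < p.colLen j := p.lt_parts_iff_lt_colLen.mp hx
  set T : ℕ → ℤ := fun a =>
    if a < i then p.beta i else if a < p.colLen j then p.beta a else p.footBeta j with hT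
  have htel : ∀ a, p.beta a - p.betaOffRimHook i j a = T a - T (a + 1) := by
    intro a
    rcases lt_or_ge a i with ha | ha
    · rw [betaOffRimHook_of_lt ha]
      rcases lt_or_eq_of_le (show a + 1 ≤ i from ha) with ha' | rfl
      · simp only [hT]; split_ifs <;> omega
      · simp only [hT]; split_ifs <;> omega
    rcases lt_trichotomy (a + 1) (p.colLen j) with hac | hac | hac
    · rw [betaOffRimHook_of_le_of_lt ha hac]; simp only [hT]; split_ifs <;> omega
    · rw [betaOffRimHook_of_add_one_eq_colLen hx hac]; simp only [hT]; split_ifs <;> omega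
    · rw [betaOffRimHook_of_colLen_le (by omega)]; simp only [hT]; split_ifs <;> omega
  rw [Finset.sum_congr rfl fun a _ => htel a, Finset.sum_range_sub']
  rcases Nat.eq_zero_or_pos i with rfl | hi
  · simp only [hT]; split_ifs <;> omega
  · simp only [hT]; split_ifs <;> omega

lemma size_eq_ncard_cells_diff_rimHook_add (hx : (i, j) ∈ p.cells) :
    (p.size : ℤ) = (p.cells \ p.rimHook i j).ncard + (p.beta i - p.footBeta j) := by
  obtain ⟨N, hN⟩ := p.finite_support
  have hp : p.size = ∑ a ∈ Finset.range (max N (p.colLen j)), p.parts a :=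
    ncard_setOf_lt fun a ha => hN a (by omega)
  have hoff : (p.cells \ p.rimHook i j).ncard
      = ∑ a ∈ Finset.range (max N (p.colLen j)), p.partsOffRimHook i j a := by
    rw [cells_diff_rimHook]
    refine ncard_setOf_lt fun a ha => ?_
    have := hN a (by omega)
    simp only [partsOffRimHook]
    split_ifs <;> omega
  rw [hp, hoff, ← sum_beta_sub_betaOffRimHook hx (le_max_right _ _)]
  simp only [beta, betaOffRimHook, sub_sub_sub_cancel_right, Finset.sum_sub_distrib]
  push_cast
  ring

lemma beta_sub_footBeta_eq_of_size_eq (hpq : p.size = q.size) (hx : (i, j) ∈ p.cells)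
    (hy : (k, l) ∈ q.cells) (hrel : p.cells \ p.rimHook i j = q.cells \ q.rimHook k l) :
    p.beta i - p.footBeta j = q.beta k - q.footBeta l := by
  have hp := size_eq_ncard_cells_diff_rimHook_add hx
  have hq := size_eq_ncard_cells_diff_rimHook_add hy
  rw [hpq, hrel] at hp
  omega

end

def IsOtherRimHookPair (p q : Partition') (x y : ℕ × ℕ) (z : (ℕ × ℕ) × (ℕ × ℕ)) : Prop :=
  z ≠ (x, y) ∧ z.1 ∈ p.cells ∧ z.2 ∈ q.cells ∧
    p.cells \ p.rimHook z.1.1 z.1.2 = q.cells \ q.rimHook z.2.1 z.2.2 ∧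
    (p.legLength x.1 x.2 + q.legLength y.1 y.2) % 2
      ≠ (p.legLength z.1.1 z.1.2 + q.legLength z.2.1 z.2.2) % 2

lemma isOtherRimHookPair_swap {p q : Partition'} {x y : ℕ × ℕ} {z : (ℕ × ℕ) × (ℕ × ℕ)} :
    IsOtherRimHookPair q p y x z.swap ↔ IsOtherRimHookPair p q x y z := by
  obtain ⟨z₁, z₂⟩ := z
  simp only [IsOtherRimHookPair, Prod.swap_prod_mk, ne_eq, Prod.mk.injEq,
    eq_comm (a := q.cells \ _)]
  constructor <;> rintro ⟨h1, h2, h3, h4, h5⟩ <;> exact ⟨by tauto, h3, h2, h4, by omega⟩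

lemma existsUnique_isOtherRimHookPair_of_footBeta_lt {p q : Partition'} {i j k l : ℕ}
    (hpq : p.size = q.size) (hx : (i, j) ∈ p.cells) (hy : (k, l) ∈ q.cells)
    (hrel : p.cells \ p.rimHook i j = q.cells \ q.rimHook k l)
    (hlt : q.footBeta l < p.footBeta j) :
    ∃! z, IsOtherRimHookPair p q (i, j) (k, l) z := by
  have hAB := (cells_diff_rimHook_eq_iff hx hy).mp hrel
  have hsub := beta_sub_footBeta_eq_of_size_eq hpq hx hy hrel
  have hA := p.footBeta_notMem_betaSet (j := j)
  have hB := q.footBeta_notMem_betaSet (j := l)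
  have hbβ := q.footBeta_lt_beta_iff.mpr (q.lt_parts_iff_lt_colLen.mp hy)
  have hβA := notMem_of_moveBead_eq hAB.symm q.beta_mem_betaSet hB (by omega)
  obtain ⟨haB, haβ⟩ := mem_of_moveBead_eq hAB hlt.ne'
  obtain ⟨j₂, hx₂, hj₂⟩ := exists_footBeta_eq (show q.beta k < p.beta i by omega) hβA
  obtain ⟨k₂, hk₂⟩ : ∃ k₂, q.beta k₂ = p.footBeta j := by rwa [betaSet_one] at haB
  obtain ⟨l₂, hy₂, hl₂⟩ := exists_footBeta_eq (show q.footBeta l < q.beta k₂ by omega) hB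
  refine ⟨((i, j₂), (k₂, l₂)), ⟨?_, hx₂, hy₂, ?_, ?_⟩, ?_⟩
  · intro h
    simp only [Prod.mk.injEq] at h
    exact haβ (by rw [← h.1.2]; exact hj₂)
  · refine (cells_diff_rimHook_eq_iff hx₂ hy₂).mpr ?_
    rw [hj₂, hk₂, hl₂]
    exact moveBead_eq_moveBead_of_lt p.beta_mem_betaSet hA q.beta_mem_betaSet hB hAB hsub hlt
  · simp only [legLength_eq_ncard]
    rw [hj₂, hk₂, hl₂]
    exact ncard_parity_ne_of_lt hA q.beta_mem_betaSet hB hAB hsub hlt hbβ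
  · rintro ⟨⟨i', j'⟩, k', l'⟩ ⟨hne, hx', hy', hrel', -⟩
    obtain ⟨hi', hl', hc | hc⟩ := eq_of_moveBead_eq_of_lt p.beta_mem_betaSet hA
      q.beta_mem_betaSet hB hAB hsub hlt hbβ ((cells_diff_rimHook_eq_iff hx' hy').mp hrel')
      (q.footBeta_lt_beta_iff.mpr (q.lt_parts_iff_lt_colLen.mp hy'))
    all_goals
      obtain rfl := p.beta_strictAnti.injective hi'
      obtain rfl := q.footBeta_strictMono.injective hl'
    · obtain rfl := p.footBeta_strictMono.injective hc.1
      obtain rfl := q.beta_strictAnti.injective hc.2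
      exact absurd rfl hne
    · obtain rfl := p.footBeta_strictMono.injective (hc.1.trans hj₂.symm)
      obtain rfl := q.beta_strictAnti.injective (hc.2.trans hk₂.symm)
      rw [q.footBeta_strictMono.injective hl₂]

end Partition'

theorem stmt12_general (e n : ℕ) (lam mu : Partition')
    (hn : lam.size = n) (hm : mu.size = n)
    (i j k l : ℕ) (hx : (i, j) ∈ lam.cells) (hy : (k, l) ∈ mu.cells)
    (hrel : lam.cells \ lam.rimHook i j = mu.cells \ mu.rimHook k l)
    (hres : Partition'.footRes e lam j ≠ Partition'.footRes e mu l) :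
    ∃! z : (ℕ × ℕ) × (ℕ × ℕ), z ≠ ((i, j), (k, l)) ∧
      z.1 ∈ lam.cells ∧ z.2 ∈ mu.cells ∧
      lam.cells \ lam.rimHook z.1.1 z.1.2 = mu.cells \ mu.rimHook z.2.1 z.2.2 ∧
      (Partition'.legLength lam i j + Partition'.legLength mu k l) % 2
        ≠ (Partition'.legLength lam z.1.1 z.1.2 + Partition'.legLength mu z.2.1 z.2.2) % 2 := by
  have hsize : lam.size = mu.size := hn.trans hm.symm
  have hfoot : lam.footBeta j ≠ mu.footBeta l := fun h => hres (congrArg (Int.cast : ℤ → ZMod e) h)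
  rcases hfoot.lt_or_gt with h | h
  · refine ((Equiv.prodComm _ _).existsUnique_congr
      fun _ => Partition'.isOtherRimHookPair_swap.symm).mpr ?_
    exact Partition'.existsUnique_isOtherRimHookPair_of_footBeta_lt hsize.symm hy hx hrel.symm h
  · exact Partition'.existsUnique_isOtherRimHookPair_of_footBeta_lt hsize hx hy hrel h

/-- Suppose `λ ⊳ μ` are partitions of `n` with `[μ] \ r^μ_y = [λ] \ r^λ_x` for rim hooks at
`x = (i,j)` and `y = (k,l)`.  If the foot residues mod `e` of `r^λ_x` and `r^μ_y` differ,
then there is exactly one other pair of rim hooks `(r^λ_{x'}, r^μ_{y'})` with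
`[λ] \ r^λ_{x'} = [μ] \ r^μ_{y'}`, and the leg-length sums of the two pairs have opposite
parities. -/
theorem stmt12 (e n : ℕ) (he : 2 ≤ e) (lam mu : Partition')
    (hn : lam.size = n) (hm : mu.size = n)
    (hdom : Partition'.Dominates lam mu) (hne : lam ≠ mu)
    (i j k l : ℕ) (hx : (i, j) ∈ lam.cells) (hy : (k, l) ∈ mu.cells)
    (hrel : lam.cells \ lam.rimHook i j = mu.cells \ mu.rimHook k l)
    (hres : Partition'.footRes e lam j ≠ Partition'.footRes e mu l) :
    ∃! z : (ℕ × ℕ) × (ℕ × ℕ), z ≠ ((i, j), (k, l)) ∧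
      z.1 ∈ lam.cells ∧ z.2 ∈ mu.cells ∧
      lam.cells \ lam.rimHook z.1.1 z.1.2 = mu.cells \ mu.rimHook z.2.1 z.2.2 ∧
      (Partition'.legLength lam i j + Partition'.legLength mu k l) % 2
        ≠ (Partition'.legLength lam z.1.1 z.1.2 + Partition'.legLength mu z.2.1 z.2.2) % 2 :=
  stmt12_general e n lam mu hn hm i j k l hx hy hrel hres
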